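/- For all real numbers x, y ≥ 0 and all p with 2 ≤ p < ∞, the inequality |x - y|^p ≤ (x - y)(x^{p-1} - y^{p-1}) holds. -/
import Mathlib

theorem stmt_0 (x y : ℝ) (hx : 0 ≤ x) (hy : 0 ≤ y) (p : ℝ) (hp : 2 ≤ p) :
    |x - y| ^ p ≤ (x - y) * (x ^ (p - 1) - y ^ (p - 1)) := by
  have main : ∀ a b : ℝ, 0 ≤ a → 0 ≤ b → b ≤ a →
      |a - b| ^ p ≤ (a - b) * (a ^ (p - 1) - b ^ (p - 1)) := by
    intro a b ha hb hba
    rw [abs_of_nonneg (by linarith)]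
    have keyN := NNReal.add_rpow_le_rpow_add (⟨a - b, sub_nonneg.2 hba⟩)
      (⟨b, hb⟩) (by linarith : 1 ≤ p - 1)
    have key : (a - b) ^ (p - 1) + b ^ (p - 1) ≤ (a - b + b) ^ (p - 1) := by
      exact_mod_cast keyN
    rw [sub_add_cancel] at key
    have h1 : (a - b) ^ (p - 1) ≤ a ^ (p - 1) - b ^ (p - 1) := by linarith
    have h2 : (a - b) ^ p = (a - b) * (a - b) ^ (p - 1) := by
      rw [show p = 1 + (p - 1) by ring, Real.rpow_add' (by linarith) (by intro h; linarith),
        Real.rpow_one]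
      ring_nf
    rw [h2]
    exact mul_le_mul_of_nonneg_left h1 (by linarith)
  rcases le_total y x with h | h
  · exact main x y hx hy h
  · have := main y x hy hx h
    calc |x - y| ^ p = |y - x| ^ p := by rw [abs_sub_comm]
      _ ≤ (y - x) * (y ^ (p - 1) - x ^ (p - 1)) := this
      _ = (x - y) * (x ^ (p - 1) - y ^ (p - 1)) := by ring
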